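/- arXiv:2106.11937 — 2 statements merged into one kernel-verified Lean document; each statement's English description precedes it below -/
import Mathlib

section
/- Let X be a metric space, α ≥ 0, F ⊆ X, and f : X → ℝ a 1-Lipschitz map. Then ∫*_ℝ H^α(F ∩ f⁻¹(y)) dy ≤ H^{α+1}(F), where H^s denotes s-dimensional Hausdorff measure on X and ∫* the upper (outer) integral. -/
/-!
Cover `F` by countably many sets `tᵢ` of small diameter with `∑ (diam tᵢ)^(α+1)` close to
`H^{α+1}(F)`. Since `f` is 1-Lipschitz, `Iᵢ := closure (f(tᵢ))` has length at most `diam tᵢ`,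
and for each `y` the sets `tᵢ` with `y ∈ Iᵢ` cover the fibre `F ∩ f⁻¹(y)`. Hence the measurable
function `y ↦ ∑ᵢ (diam tᵢ)^α 1_{Iᵢ}(y)` dominates the `H^α` premeasure of the fibre and has
integral at most `∑ (diam tᵢ)^(α+1)`. Letting the scale tend to zero, Fatou's lemma bounds the
integral of the `liminf` of these functions, which dominates `H^α(F ∩ f⁻¹(y))`, by `H^{α+1}(F)`.
-/

open MeasureTheory

noncomputable def upperIntegral (g : ℝ → ENNReal) : ENNReal :=
  ⨅ (h : ℝ → ENNReal) (_ : Measurable h) (_ : ∀ᵐ y : ℝ, g y ≤ h y), ∫⁻ y, h y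

open Filter Metric Set Topology
open scoped ENNReal

theorem upperIntegral_le_lintegral {g h : ℝ → ℝ≥0∞} (hh : Measurable h) (hgh : ∀ᵐ y, g y ≤ h y) :
    upperIntegral g ≤ ∫⁻ y, h y :=
  iInf₂_le_of_le h hh (iInf_le _ hgh)

theorem ENNReal.rpow_mul_le_rpow_add_one {d v : ℝ≥0∞} (hd : d ≠ ∞) (hv : v ≤ d) (α : ℝ) :
    d ^ α * v ≤ d ^ (α + 1) := by
  rcases eq_or_ne d 0 with rfl | hd₀
  · simp [nonpos_iff_eq_zero.mp hv]
  calc d ^ α * v ≤ d ^ α * d := by gcongr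
    _ = d ^ (α + 1) := by rw [ENNReal.rpow_add α 1 hd₀ hd, ENNReal.rpow_one]

theorem LipschitzWith.volume_closure_image_le_ediam {X : Type*} [PseudoEMetricSpace X]
    {f : X → ℝ} (hf : LipschitzWith 1 f) (t : Set X) :
    volume (closure (f '' t)) ≤ ediam t :=
  calc volume (closure (f '' t)) ≤ ediam (closure (f '' t)) := Real.volume_le_diam _
    _ = ediam (f '' t) := ediam_closure _
    _ ≤ ediam t := by simpa using hf.ediam_image_le t

section CoverProfile

variable {X : Type*} [PseudoEMetricSpace X]

noncomputable def coverProfile (f : X → ℝ) (t : ℕ → Set X) (α : ℝ) (y : ℝ) : ℝ≥0∞ :=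
  ∑' i, (closure (f '' t i)).indicator (fun _ => ediam (t i) ^ α) y

theorem measurable_coverProfile (f : X → ℝ) (t : ℕ → Set X) (α : ℝ) :
    Measurable (coverProfile f t α) :=
  Measurable.tsum fun _ => measurable_const.indicator isClosed_closure.measurableSet

theorem lintegral_coverProfile_le {f : X → ℝ} (hf : LipschitzWith 1 f) {t : ℕ → Set X}
    (ht : ∀ i, ediam (t i) ≠ ∞) (α : ℝ) :
    ∫⁻ y, coverProfile f t α y ≤ ∑' i, ⨆ _ : (t i).Nonempty, ediam (t i) ^ (α + 1) := by
  simp_rw [coverProfile]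
  rw [lintegral_tsum fun _ =>
    (measurable_const.indicator isClosed_closure.measurableSet).aemeasurable]
  refine ENNReal.tsum_le_tsum fun i => ?_
  rw [lintegral_indicator_const isClosed_closure.measurableSet]
  rcases (t i).eq_empty_or_nonempty with hi | hi
  · simp [hi]
  · simpa only [hi, iSup_pos] using
      ENNReal.rpow_mul_le_rpow_add_one (ht i) (hf.volume_closure_image_le_ediam (t i)) α

end CoverProfile

section HausdorffMeasure

variable {X : Type*} [EMetricSpace X] [MeasurableSpace X] [BorelSpace X]

theorem exists_cover_tsum_le_hausdorffMeasure_add {d : ℝ} {s : Set X} (hs : μH[d] s ≠ ∞)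
    {r ε : ℝ≥0∞} (hr : 0 < r) (hε : ε ≠ 0) :
    ∃ t : ℕ → Set X, s ⊆ ⋃ i, t i ∧ (∀ i, ediam (t i) ≤ r) ∧
      ∑' i, ⨆ _ : (t i).Nonempty, ediam (t i) ^ d ≤ μH[d] s + ε := by
  have hle : (⨅ (t : ℕ → Set X) (_ : s ⊆ ⋃ i, t i) (_ : ∀ i, ediam (t i) ≤ r),
      ∑' i, ⨆ _ : (t i).Nonempty, ediam (t i) ^ d) ≤ μH[d] s := by
    rw [Measure.hausdorffMeasure_apply]
    exact le_iSup₂_of_le r hr le_rfl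
  obtain ⟨t, hst, htr, hlt⟩ := by
    simpa only [iInf_lt_iff] using hle.trans_lt (ENNReal.lt_add_right hs hε)
  exact ⟨t, hst, htr, hlt.le⟩

theorem hausdorffMeasure_inter_preimage_le_liminf_coverProfile {β : Type*} {l : Filter β}
    {s : Set X} {f : X → ℝ} {t : β → ℕ → Set X} {r : β → ℝ≥0∞} (hr : Tendsto r l (𝓝 0))
    (htr : ∀ n i, ediam (t n i) ≤ r n) (hst : ∀ n, s ⊆ ⋃ i, t n i) (α y : ℝ) :
    μH[α] (s ∩ f ⁻¹' {y}) ≤ liminf (fun n => coverProfile f (t n) α y) l := by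
  have hcover : ∀ n, s ∩ f ⁻¹' {y} ⊆
      ⋃ i : {i | y ∈ closure (f '' t n i)}, t n i := by
    rintro n x ⟨hxs, rfl⟩
    obtain ⟨i, hi⟩ := mem_iUnion.mp (hst n hxs)
    exact mem_iUnion.mpr ⟨⟨i, subset_closure (mem_image_of_mem f hi)⟩, hi⟩
  have hsum : ∀ n, ∑' i : {i | y ∈ closure (f '' t n i)}, ediam (t n i) ^ α =
      coverProfile f (t n) α y := fun n =>
    tsum_subtype {i | y ∈ closure (f '' t n i)} fun i => ediam (t n i) ^ α
  simpa only [hsum] using Measure.hausdorffMeasure_le_liminf_tsum α _ r hr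
    (fun n (i : {i | y ∈ closure (f '' t n i)}) => t n i)
    (Eventually.of_forall fun n i => htr n i) (Eventually.of_forall hcover)

end HausdorffMeasure

theorem coarea_inequality_general {X : Type*} [EMetricSpace X] [MeasurableSpace X] [BorelSpace X]
    (F : Set X) (f : X → ℝ) (hf : LipschitzWith 1 f) (α : ℝ) :
    upperIntegral (fun y => μH[α] (F ∩ f ⁻¹' {y})) ≤ μH[α + 1] F := by
  rcases eq_or_ne (μH[α + 1] F) ∞ with hF | hF
  · simp [hF]
  set e : ℕ → ℝ≥0∞ := fun n => ((n + 1 : ℕ) : ℝ≥0∞)⁻¹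
  have he : Tendsto e atTop (𝓝 0) :=
    ENNReal.tendsto_inv_nat_nhds_zero.comp (tendsto_add_atTop_nat 1)
  have he_pos : ∀ n, 0 < e n := fun n => ENNReal.inv_pos.mpr (ENNReal.natCast_ne_top _)
  have he_ne_top : ∀ n, e n ≠ ∞ := fun n =>
    ENNReal.inv_ne_top.mpr (Nat.cast_ne_zero.mpr n.succ_ne_zero)
  choose t hFt hte htF using fun n =>
    exists_cover_tsum_le_hausdorffMeasure_add hF (he_pos n) (he_pos n).ne'
  have hte_ne_top : ∀ n i, ediam (t n i) ≠ ∞ := fun n i =>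
    ne_top_of_le_ne_top (he_ne_top n) (hte n i)
  calc upperIntegral (fun y => μH[α] (F ∩ f ⁻¹' {y}))
      ≤ ∫⁻ y, liminf (fun n => coverProfile f (t n) α y) atTop :=
        upperIntegral_le_lintegral (.liminf fun n => measurable_coverProfile f (t n) α)
          (ae_of_all _ (hausdorffMeasure_inter_preimage_le_liminf_coverProfile he hte hFt α))
    _ ≤ liminf (fun n => ∫⁻ y, coverProfile f (t n) α y) atTop :=
        lintegral_liminf_le fun n => measurable_coverProfile f (t n) α
    _ ≤ liminf (fun n => μH[α + 1] F + e n) atTop :=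
        liminf_le_liminf (Eventually.of_forall fun n =>
          (lintegral_coverProfile_le hf (hte_ne_top n) α).trans (htF n))
    _ = μH[α + 1] F := by simpa using (tendsto_const_nhds.add he).liminf_eq

/-- Eilenberg's co-area inequality: for any metric space X, α ≥ 0, F ⊆ X and
1-Lipschitz f : X → ℝ, the upper integral of y ↦ H^α(F ∩ f⁻¹(y)) is at most H^{α+1}(F). -/
theorem coarea_inequality {X : Type*} [EMetricSpace X] [MeasurableSpace X] [BorelSpace X]
    (F : Set X) (f : X → ℝ) (hf : LipschitzWith 1 f) (α : ℝ) (hα : 0 ≤ α) :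
    upperIntegral (fun y => μH[α] (F ∩ f ⁻¹' {y})) ≤ μH[α + 1] F :=
  coarea_inequality_general F f hf α
end

section
/- Let X be a metric space, F ⊆ X, f : X → ℝ 1-Lipschitz, α > 0, and [a,b] ⊂ ℝ with a < b. If H^α(F ∩ f⁻¹(y)) = ∞ for every y ∈ [a,b], then H^{α+1}(F) = ∞; consequently the Hausdorff dimension of F is at least α + 1. -/
/-!
Cover `F` by sets `tₙ` of diameter at most `δ` with `∑ diam(tₙ)^(α+1)` close to `H^{α+1}_δ(F)`.
For each `y`, the sets `tₙ` with `y ∈ f(tₙ)` cover the slice `F ∩ f⁻¹(y)`, so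
`H^α_δ(F ∩ f⁻¹(y)) ≤ g(y) := ∑ₙ diam(tₙ)^α · 1_{f(tₙ)}(y)`, and since `|f(tₙ)| ≤ diam tₙ`,
`∫ g ≤ ∑ diam(tₙ)^(α+1)`. Since `g` is measurable (which `y ↦ H^α_δ(F ∩ f⁻¹(y))` need not be),
Chebyshev's inequality for `g` bounds the outer measure of `{y | M ≤ H^α_δ(F ∩ f⁻¹(y))}` by
`(H^{α+1}(F) + 1) / M`. If the slices over `[a, b]` have infinite `H^α`-measure, these sets
exhaust `[a, b]` as `δ → 0`, so `M (b - a) ≤ H^{α+1}(F) + 1` for every `M`.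
-/

open MeasureTheory Set
open scoped ENNReal NNReal

/-- The empty set gets weight `0` even when `d ≤ 0`, where `0 ^ d ≠ 0`. -/
noncomputable def diamPow {X : Type*} [EMetricSpace X] (d : ℝ) (t : Set X) : ℝ≥0∞ :=
  ⨆ _ : t.Nonempty, Metric.ediam t ^ d

/-- The approximating measure `H^d_r` at scale `r`, as in `Measure.hausdorffMeasure_apply`. -/
noncomputable def hausdorffApprox {X : Type*} [EMetricSpace X] (d : ℝ) (r : ℝ≥0∞) (s : Set X) :
    ℝ≥0∞ :=
  ⨅ (t : ℕ → Set X) (_ : s ⊆ ⋃ n, t n) (_ : ∀ n, Metric.ediam (t n) ≤ r), ∑' n, diamPow d (t n)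

section HausdorffApprox

variable {X : Type*} [EMetricSpace X]

lemma diamPow_mul_ediam {α : ℝ} (hα : 0 ≤ α) (t : Set X) :
    diamPow α t * Metric.ediam t = diamPow (α + 1) t := by
  rcases t.eq_empty_or_nonempty with rfl | ht
  · simp [diamPow]
  · simp only [diamPow, ciSup_pos ht, ENNReal.rpow_add_of_nonneg α 1 hα zero_le_one,
      ENNReal.rpow_one]

lemma hausdorffApprox_le_tsum {d : ℝ} {r : ℝ≥0∞} {s : Set X} {t : ℕ → Set X}
    (hcov : s ⊆ ⋃ n, t n) (hdiam : ∀ n, Metric.ediam (t n) ≤ r) :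
    hausdorffApprox d r s ≤ ∑' n, diamPow d (t n) :=
  iInf₂_le_of_le t hcov (iInf_le _ hdiam)

lemma hausdorffApprox_anti (d : ℝ) {r r' : ℝ≥0∞} (h : r ≤ r') (s : Set X) :
    hausdorffApprox d r' s ≤ hausdorffApprox d r s :=
  le_iInf₂ fun _ hcov => le_iInf fun hdiam =>
    hausdorffApprox_le_tsum hcov fun n => (hdiam n).trans h

lemma exists_cover_tsum_diamPow_lt {d : ℝ} {r c : ℝ≥0∞} {s : Set X}
    (h : hausdorffApprox d r s < c) :
    ∃ t : ℕ → Set X, s ⊆ ⋃ n, t n ∧ (∀ n, Metric.ediam (t n) ≤ r) ∧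
      ∑' n, diamPow d (t n) < c := by
  simpa only [hausdorffApprox, iInf_lt_iff, exists_prop] using h

variable [MeasurableSpace X] [BorelSpace X]

lemma hausdorffMeasure_eq_iSup_hausdorffApprox (d : ℝ) (s : Set X) :
    μH[d] s = ⨆ (r : ℝ≥0∞) (_ : 0 < r), hausdorffApprox d r s :=
  Measure.hausdorffMeasure_apply d s

lemma hausdorffApprox_le_hausdorffMeasure (d : ℝ) {r : ℝ≥0∞} (hr : 0 < r) (s : Set X) :
    hausdorffApprox d r s ≤ μH[d] s :=
  (hausdorffMeasure_eq_iSup_hausdorffApprox d s).symm ▸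
    le_iSup₂ (f := fun r (_ : 0 < r) => hausdorffApprox d r s) r hr

lemma exists_nat_lt_hausdorffApprox {d : ℝ} {s : Set X} {M : ℝ≥0∞} (h : M < μH[d] s) :
    ∃ n : ℕ, M < hausdorffApprox d ((n : ℝ≥0∞) + 1)⁻¹ s := by
  rw [hausdorffMeasure_eq_iSup_hausdorffApprox] at h
  obtain ⟨r, hM⟩ := lt_iSup_iff.1 h
  obtain ⟨hr, hM⟩ := lt_iSup_iff.1 hM
  obtain ⟨n, hn⟩ := ENNReal.exists_inv_nat_lt hr.ne'
  refine ⟨n, hM.trans_le (hausdorffApprox_anti d (le_trans ?_ hn.le) s)⟩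
  exact ENNReal.inv_le_inv.2 le_self_add

end HausdorffApprox

section Coarea

variable {X : Type*} [EMetricSpace X] {f : X → ℝ} {K : ℝ≥0} {α : ℝ} {δ : ℝ≥0∞} {s : Set X}

theorem exists_measurable_slice_majorant (hf : LipschitzWith K f) (hα : 0 ≤ α)
    {t : ℕ → Set X} (hcov : s ⊆ ⋃ n, t n) (hdiam : ∀ n, Metric.ediam (t n) ≤ δ) :
    ∃ g : ℝ → ℝ≥0∞, Measurable g ∧ (∀ y, hausdorffApprox α δ (s ∩ f ⁻¹' {y}) ≤ g y) ∧
      ∫⁻ y, g y ≤ K * ∑' n, diamPow (α + 1) (t n) := by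
  classical
  set I : ℕ → Set ℝ := fun n => toMeasurable volume (f '' t n)
  have hI : ∀ n, MeasurableSet (I n) := fun n => measurableSet_toMeasurable _ _
  refine ⟨fun y => ∑' n, (I n).indicator (fun _ => diamPow α (t n)) y,
    Measurable.tsum fun n => measurable_const.indicator (hI n), fun y => ?_, ?_⟩
  · have hcov_y : s ∩ f ⁻¹' {y} ⊆ ⋃ n, if y ∈ I n then t n else ∅ := by
      rintro x ⟨hxs, hxy⟩
      obtain ⟨n, hxn⟩ := mem_iUnion.1 (hcov hxs)
      have hyI : y ∈ I n := subset_toMeasurable _ _ ⟨x, hxn, hxy⟩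
      exact mem_iUnion.2 ⟨n, by simpa [hyI] using hxn⟩
    have hdiam_y : ∀ n, Metric.ediam (if y ∈ I n then t n else ∅) ≤ δ := fun n => by
      split_ifs
      exacts [hdiam n, by simp]
    refine (hausdorffApprox_le_tsum hcov_y hdiam_y).trans (ENNReal.tsum_le_tsum fun n => ?_)
    by_cases hy : y ∈ I n <;> simp [hy, diamPow]
  · have hvol : ∀ n, volume (I n) ≤ K * Metric.ediam (t n) := fun n =>
      calc volume (I n) = volume (f '' t n) := measure_toMeasurable _
        _ ≤ Metric.ediam (f '' t n) := Real.volume_le_diam _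
        _ ≤ K * Metric.ediam (t n) := hf.ediam_image_le _
    rw [lintegral_tsum fun n => (measurable_const.indicator (hI n)).aemeasurable,
      ← ENNReal.tsum_mul_left]
    refine ENNReal.tsum_le_tsum fun n => ?_
    calc ∫⁻ y, (I n).indicator (fun _ => diamPow α (t n)) y
        = diamPow α (t n) * volume (I n) := lintegral_indicator_const (hI n) _
      _ ≤ diamPow α (t n) * (K * Metric.ediam (t n)) := by gcongr; exact hvol n
      _ = K * diamPow (α + 1) (t n) := by rw [mul_left_comm, diamPow_mul_ediam hα]

theorem mul_volume_le_tsum_diamPow (hf : LipschitzWith K f) (hα : 0 ≤ α) {t : ℕ → Set X}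
    (hcov : s ⊆ ⋃ n, t n) (hdiam : ∀ n, Metric.ediam (t n) ≤ δ) (M : ℝ≥0∞) :
    M * volume {y | M ≤ hausdorffApprox α δ (s ∩ f ⁻¹' {y})} ≤
      K * ∑' n, diamPow (α + 1) (t n) := by
  obtain ⟨g, hg, hslice, hint⟩ := exists_measurable_slice_majorant hf hα hcov hdiam
  calc M * volume {y | M ≤ hausdorffApprox α δ (s ∩ f ⁻¹' {y})}
      ≤ M * volume {y | M ≤ g y} := by
        gcongr with y
        exact hslice y
    _ ≤ ∫⁻ y, g y := mul_meas_ge_le_lintegral hg M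
    _ ≤ K * ∑' n, diamPow (α + 1) (t n) := hint

theorem hausdorffMeasure_add_one_eq_top_of_slices [MeasurableSpace X] [BorelSpace X]
    (hf : LipschitzWith K f) (hα : 0 ≤ α) {E : Set ℝ} (hE : volume E ≠ 0)
    (hslice : ∀ y ∈ E, μH[α] (s ∩ f ⁻¹' {y}) = ∞) : μH[α + 1] s = ∞ := by
  set A : ℕ → ℕ → Set ℝ := fun M n =>
    {y | (M : ℝ≥0∞) ≤ hausdorffApprox α ((n : ℝ≥0∞) + 1)⁻¹ (s ∩ f ⁻¹' {y})}
  have hA_mono : ∀ M, Monotone (A M) := fun M _ _ hmn y hy =>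
    hy.trans (hausdorffApprox_anti α (by gcongr) _)
  have hE_sub : ∀ M, E ⊆ ⋃ n, A M n := fun M y hy =>
    have ⟨n, hn⟩ := exists_nat_lt_hausdorffApprox ((hslice y hy).symm ▸ ENNReal.natCast_lt_top M)
    mem_iUnion.2 ⟨n, hn.le⟩
  by_contra hfin
  have hbound : ∀ (M n : ℕ), (M : ℝ≥0∞) * volume (A M n) ≤ K * (μH[α + 1] s + 1) := by
    intro M n
    obtain ⟨t, hcov, hdiam, hsum⟩ := exists_cover_tsum_diamPow_lt
      ((hausdorffApprox_le_hausdorffMeasure (α + 1) (r := ((n : ℝ≥0∞) + 1)⁻¹) (by simp) s)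
        |>.trans_lt (ENNReal.lt_add_right hfin one_ne_zero))
    exact (mul_volume_le_tsum_diamPow hf hα hcov hdiam _).trans (by gcongr)
  have hE_bound : ∀ M : ℕ, (M : ℝ≥0∞) * volume E ≤ K * (μH[α + 1] s + 1) := fun M =>
    calc (M : ℝ≥0∞) * volume E ≤ M * ⨆ n, volume (A M n) := by
          gcongr
          exact (measure_mono (hE_sub M)).trans_eq (hA_mono M).measure_iUnion
      _ = ⨆ n, M * volume (A M n) := ENNReal.mul_iSup _ _
      _ ≤ K * (μH[α + 1] s + 1) := iSup_le (hbound M)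
  refine ENNReal.mul_ne_top (ENNReal.coe_ne_top (r := K))
    (ENNReal.add_ne_top.2 ⟨hfin, ENNReal.one_ne_top⟩) (top_unique ?_)
  rw [← ENNReal.top_mul hE, ← ENNReal.iSup_natCast, ENNReal.iSup_mul]
  exact iSup_le hE_bound

end Coarea

/-- If f : X → ℝ is 1-Lipschitz, α > 0, and H^α(F ∩ f⁻¹(y)) = ∞ for every y in a
nondegenerate interval [a,b], then H^{α+1}(F) = ∞ and dim F ≥ α + 1. -/
theorem infinite_slices_lower_bound {X : Type*} [EMetricSpace X] [MeasurableSpace X]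
    [BorelSpace X] (F : Set X) (f : X → ℝ) (hf : LipschitzWith 1 f)
    (α : ℝ) (hα : 0 < α) (a b : ℝ) (hab : a < b)
    (hslice : ∀ y ∈ Set.Icc a b, μH[α] (F ∩ f ⁻¹' {y}) = ∞) :
    μH[α + 1] F = ∞ ∧ ENNReal.ofReal (α + 1) ≤ dimH F := by
  have hvol : volume (Icc a b) ≠ 0 := by simp [Real.volume_Icc, hab]
  have htop : μH[α + 1] F = ∞ := hausdorffMeasure_add_one_eq_top_of_slices hf hα.le hvol hslice
  refine ⟨htop, le_dimH_of_hausdorffMeasure_eq_top ?_⟩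
  rwa [Real.coe_toNNReal _ (by linarith)]
end
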